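/- For every nonzero polynomial P ∈ ℂ[x_1,…,x_n] there exist constants C_P > 0, δ_P > 0 and y_P > 0 such that for all 0 < y < y_P, μ_n(S_n(P,y)) ≤ C_P · y^{δ_P}. -/

import Mathlib

/-!
Induction on the number of variables. Write `P` as a polynomial of degree `d` in the first
variable with leading coefficient `L ∈ ℂ[x₂,…,xₙ]`. Where `|L| ≥ √y`, the one-variable slice
`q` satisfies `|q(z)| ≥ |L| ∏ |z - rᵢ|` over its roots, so `|q(z)| < y` forces `z` to within
`ε = y^{1/(2(d+1))}` of a root, and each such arc has length `O(ε)`. Where `|L| < √y`, the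
induction hypothesis applied to `L` bounds the measure by `O(y^{δ_L/2})`. Fubini adds the two.
-/

open MeasureTheory Real

theorem Polynomial.exists_mem_roots_norm_sub_lt {K : Type*} [NormedField K] [IsAlgClosed K]
    (q : Polynomial K) {z : K} {ε : ℝ} (hε : 0 ≤ ε)
    (h : ‖q.eval z‖ < ‖q.leadingCoeff‖ * ε ^ q.natDegree) :
    ∃ r ∈ q.roots, ‖z - r‖ < ε := by
  by_contra! hfar
  lift ε to NNReal using hε
  have hsplit := IsAlgClosed.splits q
  have hprod : ε ^ q.natDegree ≤ (q.roots.map fun r => ‖z - r‖₊).prod := by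
    rw [hsplit.natDegree_eq_card_roots, ← Multiset.card_map (fun r => ‖z - r‖₊)]
    refine Multiset.pow_card_le_prod fun x hx => ?_
    obtain ⟨r, hr, rfl⟩ := Multiset.mem_map.mp hx
    exact_mod_cast hfar r hr
  refine h.not_ge ?_
  have hnorm (m : Multiset K) : ‖m.prod‖₊ = (m.map (‖·‖₊)).prod :=
    map_multiset_prod (nnnormHom : K →*₀ NNReal) m
  rw [hsplit.eval_eq_prod_roots, ← coe_nnnorm, ← coe_nnnorm, nnnorm_mul, hnorm, Multiset.map_map]
  exact_mod_cast mul_le_mul_right hprod _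

theorem abs_lt_of_abs_sin_lt {x ε : ℝ} (hx : |x| ≤ π / 2) (h : |sin x| < ε) :
    |x| < π / 2 * ε := by
  have := mul_abs_le_abs_sin hx
  field_simp at this ⊢
  nlinarith [pi_pos]

theorem abs_lt_or_abs_sub_lt_or_abs_add_lt_of_norm_exp_mul_I_sub_one_lt {φ ε : ℝ}
    (hφ : |φ| < 2 * π) (h : ‖Complex.exp (φ * Complex.I) - 1‖ < 2 * ε) :
    |φ| < π * ε ∨ |φ - 2 * π| < π * ε ∨ |φ + 2 * π| < π * ε := by
  rw [mul_comm, Complex.norm_exp_I_mul_ofReal_sub_one, norm_mul, Real.norm_two,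
    Real.norm_eq_abs] at h
  have hsin : |sin (φ / 2)| < ε := by linarith
  rcases le_or_gt |φ / 2| (π / 2) with hφ2 | hφ2
  · left
    have := abs_lt_of_abs_sin_lt hφ2 hsin
    rw [abs_div, abs_two] at this
    linarith
  rw [abs_lt] at hφ
  rcases lt_abs.mp hφ2 with hpos | hneg
  · right; left
    have := abs_lt_of_abs_sin_lt (x := φ / 2 - π) (abs_le.mpr ⟨by linarith, by linarith⟩)
      (by rwa [sin_sub_pi, abs_neg])
    rw [show φ - 2 * π = 2 * (φ / 2 - π) by ring, abs_mul, abs_two]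
    linarith
  · right; right
    have := abs_lt_of_abs_sin_lt (x := φ / 2 + π) (abs_le.mpr ⟨by linarith, by linarith⟩)
      (by rwa [sin_add_pi, abs_neg])
    rw [show φ + 2 * π = 2 * (φ / 2 + π) by ring, abs_mul, abs_two]
    linarith

theorem volume_setOf_norm_exp_mul_I_sub_lt_le (r : ℂ) (ε : ℝ) :
    volume {θ : ℝ | θ ∈ Set.Ioc 0 (2 * π) ∧ ‖Complex.exp (θ * Complex.I) - r‖ < ε} ≤
      ENNReal.ofReal (6 * π * ε) := by
  set s := {θ : ℝ | θ ∈ Set.Ioc 0 (2 * π) ∧ ‖Complex.exp (θ * Complex.I) - r‖ < ε}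
  -- Two points of `s` are at chord distance `< 2ε`, so `s` lies within `πε` of a point `θ₀` of
  -- `s`, up to the period `2π`.
  rcases s.eq_empty_or_nonempty with hs | ⟨θ₀, hθ₀, hθ₀r⟩
  · simp [hs]
  have hε : 0 < ε := (norm_nonneg _).trans_lt hθ₀r
  have hsub : s ⊆ Metric.ball θ₀ (π * ε) ∪ Metric.ball (θ₀ + 2 * π) (π * ε) ∪
      Metric.ball (θ₀ - 2 * π) (π * ε) := by
    rintro θ ⟨hθ, hθr⟩
    have hchord : ‖Complex.exp ((θ - θ₀ : ℝ) * Complex.I) - 1‖ < 2 * ε := by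
      calc ‖Complex.exp ((θ - θ₀ : ℝ) * Complex.I) - 1‖
          = ‖Complex.exp (θ * Complex.I) - Complex.exp (θ₀ * Complex.I)‖ := by
            rw [← one_mul ‖_ - 1‖, ← Complex.norm_exp_ofReal_mul_I θ₀, ← norm_mul, mul_sub,
              ← Complex.exp_add, mul_one]
            push_cast
            ring_nf
        _ ≤ ‖Complex.exp (θ * Complex.I) - r‖ + ‖Complex.exp (θ₀ * Complex.I) - r‖ :=
            norm_sub_le_norm_sub_add_norm_sub _ _ _ |>.trans_eq (by rw [norm_sub_rev r])
        _ < 2 * ε := by linarith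
    have hθθ₀ : |θ - θ₀| < 2 * π :=
      abs_lt.mpr ⟨by linarith [hθ.1, hθ₀.2], by linarith [hθ.2, hθ₀.1]⟩
    rcases abs_lt_or_abs_sub_lt_or_abs_add_lt_of_norm_exp_mul_I_sub_one_lt hθθ₀ hchord
      with h | h | h
    · exact Or.inl (Or.inl (by rwa [Metric.mem_ball, Real.dist_eq]))
    · exact Or.inl (Or.inr (by rwa [Metric.mem_ball, Real.dist_eq, sub_add_eq_sub_sub]))
    · exact Or.inr (by rwa [Metric.mem_ball, Real.dist_eq, sub_sub_eq_add_sub, add_sub_right_comm])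
  calc volume s ≤ volume (Metric.ball θ₀ (π * ε)) + volume (Metric.ball (θ₀ + 2 * π) (π * ε)) +
        volume (Metric.ball (θ₀ - 2 * π) (π * ε)) :=
        (measure_mono hsub).trans <| (measure_union_le _ _).trans <|
          add_le_add_left (measure_union_le _ _) _
    _ = ENNReal.ofReal (6 * π * ε) := by
        simp only [Real.volume_ball]
        rw [← ENNReal.ofReal_add (by positivity) (by positivity),
          ← ENNReal.ofReal_add (by positivity) (by positivity)]
        ring_nf

theorem Polynomial.volume_setOf_norm_eval_exp_mul_I_lt_le (q : Polynomial ℂ) {y ε : ℝ}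
    (hε : 0 ≤ ε) (hy : y ≤ ‖q.leadingCoeff‖ * ε ^ q.natDegree) :
    volume {θ : ℝ | θ ∈ Set.Ioc 0 (2 * π) ∧ ‖q.eval (Complex.exp (θ * Complex.I))‖ < y} ≤
      ENNReal.ofReal (q.natDegree * (6 * π * ε)) := by
  have hsub : {θ : ℝ | θ ∈ Set.Ioc 0 (2 * π) ∧ ‖q.eval (Complex.exp (θ * Complex.I))‖ < y} ⊆
      ⋃ r ∈ q.roots.toFinset,
        {θ : ℝ | θ ∈ Set.Ioc 0 (2 * π) ∧ ‖Complex.exp (θ * Complex.I) - r‖ < ε} := by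
    rintro θ ⟨hθ, hqθ⟩
    obtain ⟨r, hr, hθr⟩ := q.exists_mem_roots_norm_sub_lt hε (hqθ.trans_le hy)
    exact Set.mem_biUnion (Multiset.mem_toFinset.mpr hr) ⟨hθ, hθr⟩
  calc _ ≤ ∑ r ∈ q.roots.toFinset,
        volume {θ : ℝ | θ ∈ Set.Ioc 0 (2 * π) ∧ ‖Complex.exp (θ * Complex.I) - r‖ < ε} :=
        (measure_mono hsub).trans (measure_biUnion_finset_le _ _)
    _ ≤ q.roots.toFinset.card * ENNReal.ofReal (6 * π * ε) := by
        rw [← nsmul_eq_mul, ← Finset.sum_const]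
        exact Finset.sum_le_sum fun r _ => volume_setOf_norm_exp_mul_I_sub_lt_le r ε
    _ ≤ ENNReal.ofReal (q.natDegree * (6 * π * ε)) := by
        rw [ENNReal.ofReal_mul (Nat.cast_nonneg _), ENNReal.ofReal_natCast]
        gcongr
        exact_mod_cast (Multiset.toFinset_card_le _).trans (Polynomial.card_roots' q)

theorem volume_eq_lintegral_volume_setOf_cons {n : ℕ} {α : Type*} [MeasureSpace α]
    [SigmaFinite (volume : Measure α)] {s : Set (Fin (n + 1) → α)} (hs : MeasurableSet s) :
    volume s = ∫⁻ x, volume {t : α | Fin.cons t x ∈ s} := by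
  set e := MeasurableEquiv.piFinSuccAbove (fun _ : Fin (n + 1) => α) 0
  have hmp := (volume_preserving_piFinSuccAbove (fun _ : Fin (n + 1) => α) 0).symm
  rw [← hmp.measure_preimage hs.nullMeasurableSet, Measure.volume_eq_prod,
    Measure.prod_apply_symm (e.symm.measurable hs)]
  simp [e, Set.preimage, Fin.consEquiv]

/-- `S_n(P, y)` in the angle coordinates `θ ∈ (0, 2π]^σ` of the torus. -/
def smallValueSet {σ : Type*} (P : MvPolynomial σ ℂ) (y : ℝ) : Set (σ → ℝ) :=
  {θ | (∀ j, θ j ∈ Set.Ioc 0 (2 * π)) ∧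
    ‖MvPolynomial.eval (fun j => Complex.exp (θ j * Complex.I)) P‖ < y}

def HasSmallValueBound {σ : Type*} [Fintype σ] (P : MvPolynomial σ ℂ) : Prop :=
  ∃ C : ℝ, 0 < C ∧ ∃ δ : ℝ, 0 < δ ∧ ∃ yP : ℝ, 0 < yP ∧
    ∀ y : ℝ, 0 < y → y < yP → volume (smallValueSet P y) ≤ ENNReal.ofReal (C * y ^ δ)

theorem measurableSet_smallValueSet {σ : Type*} [Countable σ] (P : MvPolynomial σ ℂ) (y : ℝ) :
    MeasurableSet (smallValueSet P y) := by
  have hcont : Continuous fun θ : σ → ℝ =>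
      MvPolynomial.eval (fun j => Complex.exp (θ j * Complex.I)) P :=
    MvPolynomial.continuous_eval P |>.comp (by fun_prop)
  rw [smallValueSet, Set.ofPred_and, Set.ofPred_forall]
  exact (MeasurableSet.iInter fun j => measurable_pi_apply j measurableSet_Ioc).inter
    (measurableSet_lt hcont.norm.measurable measurable_const)

theorem hasSmallValueBound_of_isEmpty {σ : Type*} [Fintype σ] [IsEmpty σ]
    {P : MvPolynomial σ ℂ} (hP : P ≠ 0) : HasSmallValueBound P := by
  obtain ⟨a, rfl⟩ := MvPolynomial.C_surjective σ P
  have ha : a ≠ 0 := by rintro rfl; exact hP (map_zero _)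
  refine ⟨1, one_pos, 1, one_pos, ‖a‖, norm_pos_iff.mpr ha, fun y _ hy => ?_⟩
  have hempty : smallValueSet (MvPolynomial.C a : MvPolynomial σ ℂ) y = ∅ := by
    ext θ
    simp [smallValueSet, hy.le]
  simp [hempty]

section LeadingCoeff

variable {n : ℕ} (P : MvPolynomial (Fin (n + 1)) ℂ)

theorem MvPolynomial.eval_exp_mul_I_cons (t : ℝ) (x : Fin n → ℝ) :
    MvPolynomial.eval (fun j => Complex.exp ((Fin.cons t x : Fin (n + 1) → ℝ) j * Complex.I)) P =
      ((MvPolynomial.finSuccEquiv ℂ n P).map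
        (MvPolynomial.eval fun j => Complex.exp (x j * Complex.I))).eval
          (Complex.exp (t * Complex.I)) := by
  rw [← MvPolynomial.eval_eq_eval_mv_eval']
  congr 2
  exact Fin.comp_cons (fun s : ℝ => Complex.exp (s * Complex.I)) t x

theorem volume_setOf_cons_mem_smallValueSet_le {y s ε : ℝ} (hs : 0 < s) (hε : 0 ≤ ε)
    (hy : y ≤ s * ε ^ (MvPolynomial.finSuccEquiv ℂ n P).natDegree) (x : Fin n → ℝ) :
    volume {t | Fin.cons t x ∈ smallValueSet P y} ≤
      (smallValueSet (MvPolynomial.finSuccEquiv ℂ n P).leadingCoeff s).indicator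
          (fun _ => ENNReal.ofReal (2 * π)) x +
        (Set.univ.pi fun _ => Set.Ioc 0 (2 * π)).indicator
          (fun _ => ENNReal.ofReal ((MvPolynomial.finSuccEquiv ℂ n P).natDegree * (6 * π * ε)))
          x := by
  set Q := MvPolynomial.finSuccEquiv ℂ n P
  set q := Q.map (MvPolynomial.eval fun j => Complex.exp (x j * Complex.I))
  have hmem (t : ℝ) : Fin.cons t x ∈ smallValueSet P y ↔ (∀ j, x j ∈ Set.Ioc 0 (2 * π)) ∧
      t ∈ Set.Ioc 0 (2 * π) ∧ ‖q.eval (Complex.exp (t * Complex.I))‖ < y := by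
    simp only [smallValueSet, Set.mem_ofPred_eq, Fin.forall_fin_succ, Fin.cons_zero, Fin.cons_succ,
      MvPolynomial.eval_exp_mul_I_cons, q, Q]
    tauto
  by_cases hx : ∀ j, x j ∈ Set.Ioc 0 (2 * π)
  swap
  · have hempty : {t | Fin.cons t x ∈ smallValueSet P y} = ∅ :=
      Set.eq_empty_of_forall_notMem fun t ht => hx ((hmem t).mp ht).1
    simp [hempty]
  have hslice : {t | Fin.cons t x ∈ smallValueSet P y} =
      {t | t ∈ Set.Ioc 0 (2 * π) ∧ ‖q.eval (Complex.exp (t * Complex.I))‖ < y} := by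
    ext t
    simp [hmem, hx]
  rw [hslice, Set.indicator_of_mem (s := Set.univ.pi _) (Set.mem_univ_pi.mpr hx)]
  by_cases hL : x ∈ smallValueSet Q.leadingCoeff s
  · rw [Set.indicator_of_mem hL]
    refine le_add_right ((measure_mono fun t ht => ht.1).trans ?_)
    simp [Real.volume_Ioc]
  rw [Set.indicator_of_notMem hL, zero_add]
  have hLs : s ≤ ‖MvPolynomial.eval (fun j => Complex.exp (x j * Complex.I)) Q.leadingCoeff‖ :=
    not_lt.mp fun h => hL ⟨hx, h⟩
  have hL0 := norm_pos_iff.mp (hs.trans_le hLs)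
  have hdeg : q.natDegree = Q.natDegree := Polynomial.natDegree_map_of_leadingCoeff_ne_zero _ hL0
  have hlc := Polynomial.leadingCoeff_map_of_leadingCoeff_ne_zero _ hL0
  rw [← hdeg]
  refine q.volume_setOf_norm_eval_exp_mul_I_lt_le hε ?_
  rw [hlc, hdeg]
  exact hy.trans (by gcongr)

theorem volume_smallValueSet_le_of_leadingCoeff {y s ε : ℝ} (hs : 0 < s) (hε : 0 ≤ ε)
    (hy : y ≤ s * ε ^ (MvPolynomial.finSuccEquiv ℂ n P).natDegree) :
    volume (smallValueSet P y) ≤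
      ENNReal.ofReal (2 * π) *
          volume (smallValueSet (MvPolynomial.finSuccEquiv ℂ n P).leadingCoeff s) +
        ENNReal.ofReal
          ((MvPolynomial.finSuccEquiv ℂ n P).natDegree * (6 * π * ε) * (2 * π) ^ n) := by
  have hbox : MeasurableSet (Set.univ.pi fun _ : Fin n => Set.Ioc (0 : ℝ) (2 * π)) :=
    MeasurableSet.univ_pi fun _ => measurableSet_Ioc
  rw [volume_eq_lintegral_volume_setOf_cons (measurableSet_smallValueSet P y)]
  refine (lintegral_mono (volume_setOf_cons_mem_smallValueSet_le P hs hε hy)).trans_eq ?_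
  rw [lintegral_add_left (measurable_const.indicator (measurableSet_smallValueSet _ _)),
    lintegral_indicator_const (measurableSet_smallValueSet _ _), lintegral_indicator_const hbox,
    Real.volume_pi_Ioc]
  simp only [sub_zero, Finset.prod_const, Finset.card_univ, Fintype.card_fin]
  rw [← ENNReal.ofReal_pow (by positivity), ← ENNReal.ofReal_mul (by positivity)]

theorem HasSmallValueBound.of_leadingCoeff
    (hL : HasSmallValueBound (MvPolynomial.finSuccEquiv ℂ n P).leadingCoeff) :
    HasSmallValueBound P := by
  obtain ⟨C, hC, δ, hδ, y₀, hy₀, hbound⟩ := hL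
  set d := (MvPolynomial.finSuccEquiv ℂ n P).natDegree
  set b : ℝ := 1 / (2 * (d + 1))
  refine ⟨2 * π * C + d * (6 * π) * (2 * π) ^ n, by positivity, min (δ / 2) b, by positivity,
    min 1 (y₀ ^ 2), by positivity, fun y hy hyP => ?_⟩
  have hy1 : y < 1 := hyP.trans_le (min_le_left _ _)
  have hsqrt : √y < y₀ := (Real.sqrt_lt' hy₀).mpr (hyP.trans_le (min_le_right _ _))
  have hmono {a c : ℝ} (h : c ≤ a) : y ^ a ≤ y ^ c := Real.rpow_le_rpow_of_exponent_ge hy hy1.le h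
  have hsqrt_rpow : √y ^ δ = y ^ (δ / 2) := by
    rw [Real.sqrt_eq_rpow, ← Real.rpow_mul hy.le]
    ring_nf
  have hthreshold : y ≤ √y * (y ^ b) ^ d := by
    rw [Real.sqrt_eq_rpow, ← Real.rpow_mul_natCast hy.le, ← Real.rpow_add hy]
    refine (Real.rpow_one y).symm.trans_le (hmono ?_)
    have : b * d ≤ 1 / 2 := by
      rw [div_mul_eq_mul_div, one_mul, div_le_div_iff₀ (by positivity) two_pos]
      linarith
    linarith
  calc volume (smallValueSet P y)
      ≤ ENNReal.ofReal (2 * π) *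
          volume (smallValueSet (MvPolynomial.finSuccEquiv ℂ n P).leadingCoeff √y) +
        ENNReal.ofReal (d * (6 * π * y ^ b) * (2 * π) ^ n) :=
        volume_smallValueSet_le_of_leadingCoeff P (Real.sqrt_pos.mpr hy) (by positivity) hthreshold
    _ ≤ ENNReal.ofReal (2 * π) * ENNReal.ofReal (C * √y ^ δ) +
        ENNReal.ofReal (d * (6 * π * y ^ b) * (2 * π) ^ n) := by
        gcongr
        exact hbound _ (Real.sqrt_pos.mpr hy) hsqrt
    _ = ENNReal.ofReal (2 * π * (C * y ^ (δ / 2)) + d * (6 * π * y ^ b) * (2 * π) ^ n) := by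
        rw [← ENNReal.ofReal_mul (by positivity), ← ENNReal.ofReal_add (by positivity)
          (by positivity), hsqrt_rpow]
    _ ≤ ENNReal.ofReal ((2 * π * C + d * (6 * π) * (2 * π) ^ n) * y ^ min (δ / 2) b) := by
        refine ENNReal.ofReal_le_ofReal ?_
        calc _ ≤ 2 * π * (C * y ^ min (δ / 2) b) +
              d * (6 * π * y ^ min (δ / 2) b) * (2 * π) ^ n := by
              have := hmono (min_le_left (δ / 2) b)
              have := hmono (min_le_right (δ / 2) b)
              gcongr
          _ = _ := by ring

end LeadingCoeff

theorem measure_small_value_set_bound (n : ℕ) (P : MvPolynomial (Fin n) ℂ) (hP : P ≠ 0) :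
    ∃ C : ℝ, 0 < C ∧ ∃ δ : ℝ, 0 < δ ∧ ∃ yP : ℝ, 0 < yP ∧
      ∀ y : ℝ, 0 < y → y < yP →
        volume {θ : Fin n → ℝ | (∀ j, θ j ∈ Set.Ioc (0:ℝ) (2*π)) ∧
            ‖MvPolynomial.eval (fun j => Complex.exp ((θ j : ℂ) * Complex.I)) P‖ < y}
          ≤ ENNReal.ofReal (C * y ^ δ) := by
  suffices HasSmallValueBound P from this
  induction n with
  | zero => exact hasSmallValueBound_of_isEmpty hP
  | succ n ih =>
    refine HasSmallValueBound.of_leadingCoeff P (ih _ ?_)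
    exact Polynomial.leadingCoeff_ne_zero.mpr
      ((MvPolynomial.finSuccEquiv ℂ n).map_ne_zero_iff.mpr hP)
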